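/- arXiv:1805.07039 — 2 statements merged into one kernel-verified Lean document; each statement's English description precedes it below -/
import Mathlib

section
/- Let c > 0 and let p be a positive natural number. Let (w_i)_{i ∈ ℕ} be i.i.d. random vectors in ℝ^p, each standard Gaussian with scale c, and let (V_i)_{i ∈ ℕ} be i.i.d. real random variables, each with the Gaussian distribution of mean 0 and variance c², with the two families mutually independent. Then almost surely, (1/N) · Σ_{i=1}^{N} max(V_i, 0) · w_i converges to 0 as N → ∞. -/
open MeasureTheory ProbabilityTheory Filter
open scoped RealInnerProductSpace NNReal ProbabilityTheory Topology

/-!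
In each coordinate `m`, the summands `max (V i) 0 * w i m` are i.i.d. (the pairs `(V i, w i m)` are
independent with a fixed product law), integrable as products of independent integrable factors,
and centred because `w i m` is. The strong law of large numbers therefore gives a.s. convergence
to `0` in each of the finitely many coordinates, hence in `EuclideanSpace ℝ (Fin p)`.
-/

theorem PiLp.tendsto_nhds_iff {α ι : Type*} {p : ENNReal} {β : ι → Type*}
    [∀ i, TopologicalSpace (β i)] {f : α → PiLp p β} {l : Filter α} {x : PiLp p β} :
    Tendsto f l (𝓝 x) ↔ ∀ i, Tendsto (fun a => f a i) l (𝓝 (x i)) := by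
  rw [(PiLp.homeomorph p β).isInducing.tendsto_nhds_iff, tendsto_pi_nhds]
  rfl

namespace ProbabilityTheory

variable {Ω : Type*} {mΩ : MeasurableSpace Ω} {P : Measure Ω}

theorem strong_law_ae_comp_mul_of_indepFun [IsFiniteMeasure P] {α : Type*} [MeasurableSpace α]
    {μ : Measure α} {ν : Measure ℝ} {X : ℕ → Ω → α} {Y : ℕ → Ω → ℝ} {φ : α → ℝ}
    (hφ : Measurable φ) (hφμ : Integrable φ μ) (hν : Integrable id ν) (hν₀ : ∫ y, y ∂ν = 0)
    (hX : ∀ i, HasLaw (X i) μ P) (hY : ∀ i, HasLaw (Y i) ν P) (hXY : ∀ i, X i ⟂ᵢ[P] Y i)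
    (hpair : Pairwise (Function.onFun (· ⟂ᵢ[P] ·) fun (i : ℕ) (ω : Ω) => (X i ω, Y i ω))) :
    ∀ᵐ ω ∂P, Tendsto (fun n : ℕ => (∑ i ∈ Finset.range n, φ (X i ω) * Y i ω) / n)
      atTop (𝓝 0) := by
  have hφX : Integrable (fun ω => φ (X 0 ω)) P :=
    (integrable_map_measure hφ.aestronglyMeasurable (hX 0).aemeasurable).1
      ((hX 0).map_eq ▸ hφμ)
  have hY₀ : Integrable (Y 0) P :=
    (integrable_map_measure aestronglyMeasurable_id (hY 0).aemeasurable).1 ((hY 0).map_eq ▸ hν)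
  have hlaw : ∀ i, HasLaw (fun ω => (X i ω, Y i ω)) (μ.prod ν) P := fun i =>
    ⟨(hX i).aemeasurable.prodMk (hY i).aemeasurable, by
      rw [(indepFun_iff_map_prod_eq_prod_map_map (hX i).aemeasurable (hY i).aemeasurable).1
        (hXY i), (hX i).map_eq, (hY i).map_eq]⟩
  have hmul : Measurable fun q : α × ℝ => φ q.1 * q.2 :=
    (hφ.comp measurable_fst).mul measurable_snd
  have hmean : ∫ ω, φ (X 0 ω) * Y 0 ω ∂P = 0 :=
    calc ∫ ω, φ (X 0 ω) * Y 0 ω ∂P = (∫ ω, φ (X 0 ω) ∂P) * ∫ ω, Y 0 ω ∂P :=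
          (hXY 0).integral_fun_comp_mul_comp (g := id) (hX 0).aemeasurable (hY 0).aemeasurable
            hφ.aestronglyMeasurable aestronglyMeasurable_id
      _ = 0 := by rw [(hY 0).integral_eq, hν₀, mul_zero]
  have hlln := strong_law_ae_real (fun i ω => φ (X i ω) * Y i ω)
    (((hXY 0).comp hφ measurable_id).integrable_mul hφX hY₀)
    (fun i j hij => (hpair hij).comp hmul hmul)
    (fun i => ((hlaw i).identDistrib (hlaw 0)).comp hmul)
  rwa [hmean] at hlln

variable {ι γ : Type*} [MeasurableSpace γ]

theorem iIndepFun.pairwise_indepFun_prodMk_sum_elim {X Y : ι → Ω → γ}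
    (h : iIndepFun (Sum.elim X Y) P) (hX : ∀ i, AEMeasurable (X i) P)
    (hY : ∀ i, AEMeasurable (Y i) P) :
    Pairwise (Function.onFun (· ⟂ᵢ[P] ·) fun (i : ι) (ω : Ω) => (X i ω, Y i ω)) :=
  fun i j hij => h.indepFun_prodMk_prodMk₀ (fun k => by cases k <;> simp [hX, hY])
    (.inl i) (.inr i) (.inl j) (.inr j) (by simpa using hij) (by simp) (by simp)
    (by simpa using hij)

theorem iIndepFun.sum_elim_slice {κ : Type*} {Y : ι → κ → Ω → γ} {X : ι → Ω → γ}
    (h : iIndepFun (Sum.elim (fun ik : ι × κ => Y ik.1 ik.2) X) P) (k : κ) :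
    iIndepFun (Sum.elim X fun i => Y i k) P := by
  have hinj : (Sum.elim .inr fun i => .inl (i, k) : ι ⊕ ι → (ι × κ) ⊕ ι).Injective := by
    rintro (i | i) (j | j) hij <;> simp_all
  convert h.precomp hinj using 1
  funext j
  cases j <;> rfl

end ProbabilityTheory

theorem deconvnet_patch_lln_general {Ω : Type*} [MeasureSpace Ω]
    [IsProbabilityMeasure (ℙ : Measure Ω)]
    (c : ℝ) (p : ℕ)
    (w : ℕ → Ω → EuclideanSpace ℝ (Fin p)) (V : ℕ → Ω → ℝ)
    (hindep : iIndepFun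
      (fun k : (ℕ × Fin p) ⊕ ℕ =>
        Sum.elim (fun im : ℕ × Fin p => fun ω => w im.1 ω im.2) (fun i => V i) k) ℙ)
    (hw : ∀ i m, Measure.map (fun ω => w i ω m) ℙ = gaussianReal 0 ⟨c ^ 2, sq_nonneg c⟩)
    (hV : ∀ i, Measure.map (V i) ℙ = gaussianReal 0 ⟨c ^ 2, sq_nonneg c⟩) :
    ∀ᵐ ω ∂ℙ, Tendsto (fun N : ℕ =>
        (N : ℝ)⁻¹ • ∑ i ∈ Finset.range N, max (V i ω) 0 • w i ω)
      atTop (𝓝 (0 : EuclideanSpace ℝ (Fin p))) := by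
  have hlaw : ∀ {X : Ω → ℝ} {v : ℝ≥0}, Measure.map X ℙ = gaussianReal 0 v →
      HasLaw X (gaussianReal 0 v) ℙ := fun h =>
    ⟨aemeasurable_of_map_neZero ⟨by rw [h]; exact IsProbabilityMeasure.ne_zero _⟩, h⟩
  have hγ : Integrable id (gaussianReal 0 ⟨c ^ 2, sq_nonneg c⟩) :=
    memLp_one_iff_integrable.1 (memLp_id_gaussianReal 1)
  have hcoord : ∀ m : Fin p, ∀ᵐ ω ∂ℙ, Tendsto
      (fun N : ℕ => (∑ i ∈ Finset.range N, max (V i ω) 0 * w i ω m) / N) atTop (𝓝 0) := by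
    intro m
    have hind := hindep.sum_elim_slice (Y := fun i m ω => w i ω m) m
    exact strong_law_ae_comp_mul_of_indepFun (φ := fun x => max x 0)
      (measurable_id.max measurable_const) hγ.pos_part hγ integral_id_gaussianReal
      (fun i => hlaw (hV i)) (fun i => hlaw (hw i m))
      (fun i => hind.indepFun (i := .inl i) (j := .inr i) (by simp))
      (hind.pairwise_indepFun_prodMk_sum_elim (fun i => (hlaw (hV i)).aemeasurable)
        (fun i => (hlaw (hw i m)).aemeasurable))
  filter_upwards [ae_all_iff.2 hcoord] with ω hω
  refine PiLp.tendsto_nhds_iff.2 fun m => ?_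
  simpa [div_eq_inv_mul] using hω m

/-- **LLN content of Theorem 2, DeconvNet without max-pooling.** For i.i.d.
standard Gaussian (scale `c`) random vectors `w i` in `ℝ^p` and i.i.d. `N(0, c²)` variables
`V i`, all mutually independent (expressed as joint independence of all real coordinates),
almost surely `(1/N) ∑_{i<N} max(V i, 0) • w i → 0`. -/
theorem deconvnet_patch_lln {Ω : Type*} [MeasureSpace Ω]
    [IsProbabilityMeasure (ℙ : Measure Ω)]
    (c : ℝ) (hc : 0 < c) (p : ℕ) (hp : 0 < p)
    (w : ℕ → Ω → EuclideanSpace ℝ (Fin p)) (V : ℕ → Ω → ℝ)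
    (hindep : iIndepFun
      (fun k : (ℕ × Fin p) ⊕ ℕ =>
        Sum.elim (fun im : ℕ × Fin p => fun ω => w im.1 ω im.2) (fun i => V i) k) ℙ)
    (hw : ∀ i m, Measure.map (fun ω => w i ω m) ℙ = gaussianReal 0 ⟨c ^ 2, sq_nonneg c⟩)
    (hV : ∀ i, Measure.map (V i) ℙ = gaussianReal 0 ⟨c ^ 2, sq_nonneg c⟩) :
    ∀ᵐ ω ∂ℙ, Tendsto (fun N : ℕ =>
        (N : ℝ)⁻¹ • ∑ i ∈ Finset.range N, max (V i ω) 0 • w i ω)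
      atTop (𝓝 (0 : EuclideanSpace ℝ (Fin p))) :=
  deconvnet_patch_lln_general c p w V hindep hw hV
end

section
/- Let c > 0, let d, p, J be positive natural numbers, let x ∈ ℝ^d, and let D_1, …, D_J : ℝ^d → ℝ^p be linear maps. Let (w_i)_{i ∈ ℕ} be i.i.d. random vectors in ℝ^p, each standard Gaussian with scale c, and let (V_{i,j})_{i ∈ ℕ, j ∈ Fin J} be i.i.d. real random variables, each with the Gaussian distribution of mean 0 and variance c², with all of these mutually independent. Then almost surely, (1/N) · Σ_{i=1}^{N} Σ_{j=1}^{J} D_j^* ( V_{i,j} · 𝟙(⟨w_i, D_j x⟩ > 0) · w_i ) converges to 0 as N → ∞. -/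
/-!
Collect the parameters of hidden unit `i` (its filter `w_i` and its weights `V_{i,·}`) into one
coordinate vector `ξ_i`. The `ξ_i` are i.i.d. with the product Gaussian law, and the `i`-th
summand is a fixed measurable function of `ξ_i` dominated by `‖ξ_i‖²`, so the strong law of large
numbers applies. Its limit, the mean of that function, vanishes: flipping the sign of `V_{i,j}`
preserves the product Gaussian law and negates the `j`-th term while fixing the others.
-/

open MeasureTheory ProbabilityTheory Filter Function
open scoped RealInnerProductSpace NNReal ProbabilityTheory Topology

section Blocks

variable {Ω ι κ β : Type*} [MeasurableSpace Ω] {μ : Measure Ω} [MeasurableSpace β]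
  {X : ι → Ω → β} {ν : Measure β} [IsProbabilityMeasure ν]

lemma aemeasurable_of_map_eq (hlaw : ∀ i, μ.map (X i) = ν) (i : ι) : AEMeasurable (X i) μ :=
  .of_map_ne_zero (by rw [hlaw i]; exact IsProbabilityMeasure.ne_zero ν)

lemma ProbabilityTheory.iIndepFun.map_precomp_eq_pi [IsProbabilityMeasure μ] [Fintype κ]
    (hX : iIndepFun X μ) (hlaw : ∀ i, μ.map (X i) = ν) {u : κ → ι} (hu : Injective u) :
    μ.map (fun ω k => X (u k) ω) = Measure.pi fun _ => ν := by
  rw [(iIndepFun_iff_map_fun_eq_pi_map fun k => aemeasurable_of_map_eq hlaw (u k)).1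
    (hX.precomp hu)]
  simp_rw [hlaw]

lemma ProbabilityTheory.iIndepFun.pairwise_indepFun_blocks [Fintype κ] (hX : iIndepFun X μ)
    (hlaw : ∀ i, μ.map (X i) = ν) {u : ℕ → κ → ι} (hu : Injective (uncurry u)) :
    Pairwise ((IndepFun · · μ) on fun n ω k => X (u n k) ω) := by
  classical
  intro m n hmn
  let S : ℕ → Finset ι := fun n => Finset.univ.image (u n)
  have hdisj : Disjoint (S m) (S n) := by
    refine Finset.disjoint_left.2 fun i him hin => ?_
    obtain ⟨k, -, rfl⟩ := Finset.mem_image.1 him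
    obtain ⟨k', -, h⟩ := Finset.mem_image.1 hin
    exact hmn (congrArg Prod.fst (@hu (n, k') (m, k) h)).symm
  let ρ : ∀ n, (S n → β) → κ → β := fun n v k =>
    v ⟨u n k, Finset.mem_image_of_mem _ (Finset.mem_univ k)⟩
  have hρ : ∀ n, Measurable (ρ n) := fun n =>
    measurable_pi_lambda _ fun k => measurable_pi_apply _
  exact (hX.indepFun_finset₀ (S m) (S n) hdisj (aemeasurable_of_map_eq hlaw)).comp (hρ m) (hρ n)

theorem ProbabilityTheory.iIndepFun.strong_law_ae_blocks {E : Type*} [NormedAddCommGroup E]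
    [NormedSpace ℝ E] [CompleteSpace E] [MeasurableSpace E] [BorelSpace E]
    [IsProbabilityMeasure μ] [Fintype κ] (hX : iIndepFun X μ) (hlaw : ∀ i, μ.map (X i) = ν)
    {u : ℕ → κ → ι} (hu : Injective (uncurry u)) {F : (κ → β) → E} (hF : StronglyMeasurable F)
    (hFint : Integrable F (Measure.pi fun _ => ν)) :
    ∀ᵐ ω ∂μ, Tendsto (fun N : ℕ => (N : ℝ)⁻¹ • ∑ n ∈ Finset.range N, F fun k => X (u n k) ω)
      atTop (𝓝 (∫ v, F v ∂Measure.pi fun _ => ν)) := by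
  set ξ : ℕ → Ω → κ → β := fun n ω k => X (u n k) ω
  have hξ : ∀ n, AEMeasurable (ξ n) μ := fun n =>
    aemeasurable_pi_lambda _ fun k => aemeasurable_of_map_eq hlaw _
  have hlawξ : ∀ n, μ.map (ξ n) = Measure.pi fun _ => ν := fun n =>
    hX.map_precomp_eq_pi hlaw fun k k' h => congrArg Prod.snd (@hu (n, k) (n, k') h)
  have hint : Integrable (F ∘ ξ 0) μ :=
    (integrable_map_measure hF.aestronglyMeasurable (hξ 0)).1 (hlawξ 0 ▸ hFint)
  have hident : ∀ n, IdentDistrib (F ∘ ξ n) (F ∘ ξ 0) μ μ := fun n =>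
    (IdentDistrib.mk (hξ n) (hξ 0) (by rw [hlawξ, hlawξ])).comp hF.measurable
  have hindep : Pairwise ((IndepFun · · μ) on fun n => F ∘ ξ n) := fun m n hmn =>
    (hX.pairwise_indepFun_blocks hlaw hu hmn).comp hF.measurable hF.measurable
  have hmean : ∫ ω, (F ∘ ξ 0) ω ∂μ = ∫ v, F v ∂Measure.pi fun _ => ν := by
    rw [← hlawξ 0, integral_map (hξ 0) hF.aestronglyMeasurable]
    rfl
  have hlln := strong_law_ae (fun n => F ∘ ξ n) hint hindep hident
  rwa [hmean] at hlln

end Blocks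

section ProductMeasure

variable {κ E : Type*} [Fintype κ] [NormedAddCommGroup E] {ν : Measure ℝ} [IsProbabilityMeasure ν]

lemma integral_pi_eq_zero_of_odd [NormedSpace ℝ E] [DecidableEq κ]
    (hsymm : ν.map (fun x => -x) = ν) (k : κ) {G : (κ → ℝ) → E}
    (hG : ∀ v, G (update v k (-v k)) = -G v) :
    ∫ v, G v ∂Measure.pi (fun _ => ν) = 0 := by
  let flip : (κ → ℝ) ≃ᵐ (κ → ℝ) := MeasurableEquiv.piCongrRight fun i =>
    if i = k then MeasurableEquiv.neg ℝ else MeasurableEquiv.refl ℝ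
  have hflip : MeasurePreserving flip (Measure.pi fun _ => ν) (Measure.pi fun _ => ν) :=
    measurePreserving_pi _ _ fun i => by
      by_cases hi : i = k
      · simpa [hi] using (⟨measurable_neg, hsymm⟩ : MeasurePreserving (fun x => -x) ν ν)
      · simpa [hi] using MeasurePreserving.id ν
  have hflip_apply : ∀ v, flip v = update v k (-v k) := fun v => by
    ext i
    rcases eq_or_ne i k with rfl | hi
    · simp [flip, MeasurableEquiv.piCongrRight]
    · simp [flip, MeasurableEquiv.piCongrRight, hi]
  have hneg := hflip.integral_comp' G
  simp only [hflip_apply, hG, integral_neg] at hneg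
  have htwo : (2 : ℝ) • ∫ v, G v ∂Measure.pi (fun _ => ν) = 0 := by
    rw [two_smul]
    nth_rw 1 [← hneg]
    exact neg_add_cancel _
  exact (smul_eq_zero.1 htwo).resolve_left two_ne_zero

lemma integrable_pi_of_norm_le_sum_sq (hν : Integrable (fun x => x ^ 2) ν)
    {G : (κ → ℝ) → E} (hGm : AEStronglyMeasurable G (Measure.pi fun _ => ν)) (C : ℝ)
    (hG : ∀ v, ‖G v‖ ≤ C * ∑ k, v k ^ 2) :
    Integrable G (Measure.pi fun _ => ν) :=
  .mono' ((integrable_finsetSum _ fun k _ =>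
      (measurePreserving_eval _ k).integrable_comp_of_integrable hν).const_mul C)
    hGm (ae_of_all _ hG)

end ProductMeasure

section Saliency

variable {E F : Type*} [NormedAddCommGroup E] [InnerProductSpace ℝ E] [CompleteSpace E]
  [NormedAddCommGroup F] [InnerProductSpace ℝ F] [CompleteSpace F]

noncomputable def patchSaliency (A : E →L[ℝ] F) (x : E) (a : ℝ) (w : F) : E :=
  A.adjoint ((a * if 0 < ⟪w, A x⟫ then 1 else 0) • w)

lemma patchSaliency_neg (A : E →L[ℝ] F) (x : E) (a : ℝ) (w : F) :
    patchSaliency A x (-a) w = -patchSaliency A x a w := by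
  simp only [patchSaliency, neg_mul, neg_smul, map_neg]

lemma norm_patchSaliency_le (A : E →L[ℝ] F) (x : E) (a : ℝ) (w : F) :
    ‖patchSaliency A x a w‖ ≤ ‖A.adjoint‖ * (|a| * ‖w‖) := by
  refine (A.adjoint.le_opNorm _).trans (mul_le_mul_of_nonneg_left ?_ (norm_nonneg _))
  rw [norm_smul, Real.norm_eq_abs, abs_mul]
  gcongr
  split_ifs <;> simp

variable {ι κ : Type*} [Fintype κ]

/-- The parameters of one hidden unit as a single coordinate vector `v`: `v (inl m)` is the
filter coordinate `w_m` and `v (inr j)` the weight `V_j`. -/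
noncomputable def unitSaliency [Fintype ι] (D : ι → E →L[ℝ] EuclideanSpace ℝ κ) (x : E)
    (v : κ ⊕ ι → ℝ) : E :=
  ∑ j, patchSaliency (D j) x (v (.inr j)) (WithLp.toLp 2 (v ∘ .inl))

lemma stronglyMeasurable_patchSaliency (A : E →L[ℝ] EuclideanSpace ℝ κ) (x : E) (j : ι) :
    StronglyMeasurable fun v : κ ⊕ ι → ℝ =>
      patchSaliency A x (v (.inr j)) (WithLp.toLp 2 (v ∘ .inl)) := by
  have hw : Measurable fun v : κ ⊕ ι → ℝ => WithLp.toLp 2 (v ∘ .inl) :=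
    (WithLp.measurable_toLp 2 _).comp (measurable_pi_lambda _ fun m => measurable_pi_apply _)
  have hgate : Measurable fun v : κ ⊕ ι → ℝ =>
      if 0 < ⟪WithLp.toLp 2 (v ∘ .inl), A x⟫ then (1 : ℝ) else 0 :=
    Measurable.ite (measurableSet_lt measurable_const
      ((continuous_id.inner continuous_const).measurable.comp hw)) measurable_const
      measurable_const
  exact A.adjoint.continuous.comp_stronglyMeasurable
    (((measurable_pi_apply _).mul hgate).smul hw).stronglyMeasurable

lemma stronglyMeasurable_unitSaliency [Fintype ι] (D : ι → E →L[ℝ] EuclideanSpace ℝ κ)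
    (x : E) : StronglyMeasurable (unitSaliency D x) := by
  unfold unitSaliency
  exact Finset.stronglyMeasurable_fun_sum _ fun j _ => stronglyMeasurable_patchSaliency (D j) x j

lemma abs_mul_norm_le_sum_sq [Fintype ι] (v : κ ⊕ ι → ℝ) (j : ι) :
    |v (.inr j)| * ‖(WithLp.toLp 2 (v ∘ .inl) : EuclideanSpace ℝ κ)‖ ≤ ∑ k, v k ^ 2 := by
  have hw : ‖(WithLp.toLp 2 (v ∘ .inl) : EuclideanSpace ℝ κ)‖ ^ 2 = ∑ m, v (.inl m) ^ 2 := by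
    simp [EuclideanSpace.norm_sq_eq]
  have hj : v (.inr j) ^ 2 ≤ ∑ j', v (.inr j') ^ 2 :=
    Finset.single_le_sum (f := fun j' => v (.inr j') ^ 2) (fun _ _ => sq_nonneg _)
      (Finset.mem_univ j)
  rw [Fintype.sum_sum_type]
  nlinarith [two_mul_le_add_sq |v (.inr j)| ‖(WithLp.toLp 2 (v ∘ .inl) : EuclideanSpace ℝ κ)‖,
    sq_abs (v (.inr j)), Finset.sum_nonneg fun m (_ : m ∈ Finset.univ) => sq_nonneg (v (.inl m))]

variable {ν : Measure ℝ} [IsProbabilityMeasure ν]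

lemma integrable_patchSaliency [Fintype ι] (hν : Integrable (fun x => x ^ 2) ν)
    (A : E →L[ℝ] EuclideanSpace ℝ κ) (x : E) (j : ι) :
    Integrable (fun v : κ ⊕ ι → ℝ => patchSaliency A x (v (.inr j)) (WithLp.toLp 2 (v ∘ .inl)))
      (Measure.pi fun _ => ν) :=
  integrable_pi_of_norm_le_sum_sq hν (stronglyMeasurable_patchSaliency A x j).aestronglyMeasurable
    ‖A.adjoint‖ fun v => (norm_patchSaliency_le _ _ _ _).trans
      (mul_le_mul_of_nonneg_left (abs_mul_norm_le_sum_sq v j) (norm_nonneg _))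

lemma integrable_unitSaliency [Fintype ι] (hν : Integrable (fun x => x ^ 2) ν)
    (D : ι → E →L[ℝ] EuclideanSpace ℝ κ) (x : E) :
    Integrable (unitSaliency D x) (Measure.pi fun _ => ν) := by
  unfold unitSaliency
  exact integrable_finsetSum _ fun j _ => integrable_patchSaliency hν (D j) x j

lemma integral_unitSaliency_eq_zero [Fintype ι] (hν : Integrable (fun x => x ^ 2) ν)
    (hsymm : ν.map (fun x => -x) = ν) (D : ι → E →L[ℝ] EuclideanSpace ℝ κ) (x : E) :
    ∫ v, unitSaliency D x v ∂Measure.pi (fun _ => ν) = 0 := by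
  classical
  unfold unitSaliency
  rw [integral_finsetSum _ fun j _ => integrable_patchSaliency hν (D j) x j]
  refine Finset.sum_eq_zero fun j _ => integral_pi_eq_zero_of_odd hsymm (.inr j) fun v => ?_
  simp [patchSaliency_neg]

end Saliency

theorem saliency_map_vanishes_general {Ω : Type*} [MeasureSpace Ω]
    [IsProbabilityMeasure (ℙ : Measure Ω)]
    (c : ℝ) (d p J : ℕ)
    (x : EuclideanSpace ℝ (Fin d))
    (D : Fin J → EuclideanSpace ℝ (Fin d) →L[ℝ] EuclideanSpace ℝ (Fin p))
    (w : ℕ → Ω → EuclideanSpace ℝ (Fin p)) (V : ℕ × Fin J → Ω → ℝ)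
    (hindep : iIndepFun
      (fun k : (ℕ × Fin p) ⊕ (ℕ × Fin J) =>
        Sum.elim (fun im : ℕ × Fin p => fun ω => w im.1 ω im.2)
          (fun ij : ℕ × Fin J => V ij) k) ℙ)
    (hw : ∀ i m, Measure.map (fun ω => w i ω m) ℙ = gaussianReal 0 ⟨c ^ 2, sq_nonneg c⟩)
    (hV : ∀ i j, Measure.map (V (i, j)) ℙ = gaussianReal 0 ⟨c ^ 2, sq_nonneg c⟩) :
    ∀ᵐ ω ∂ℙ, Tendsto (fun N : ℕ =>
        (N : ℝ)⁻¹ • ∑ i ∈ Finset.range N, ∑ j : Fin J,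
          (ContinuousLinearMap.adjoint (D j))
            ((V (i, j) ω * (if 0 < ⟪w i ω, D j x⟫ then (1 : ℝ) else 0)) • w i ω))
      atTop (𝓝 (0 : EuclideanSpace ℝ (Fin d))) := by
  set ν : Measure ℝ := gaussianReal 0 ⟨c ^ 2, sq_nonneg c⟩
  have : IsProbabilityMeasure ν := instIsProbabilityMeasureGaussianReal _ _
  have hlaw : ∀ k, Measure.map (Sum.elim (fun im : ℕ × Fin p => fun ω => w im.1 ω im.2)
      (fun ij : ℕ × Fin J => V ij) k) ℙ = ν := by
    rintro (⟨i, m⟩ | ⟨i, j⟩)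
    exacts [hw i m, hV i j]
  have hν : Integrable (fun x => x ^ 2) ν := (memLp_id_gaussianReal 2).integrable_sq
  have hsymm : ν.map (fun x => -x) = ν := gaussianReal_map_neg.trans (by rw [neg_zero])
  have hunit : Injective (uncurry fun n : ℕ =>
      Sum.map (Prod.mk n : Fin p → ℕ × Fin p) (Prod.mk n : Fin J → ℕ × Fin J)) := by
    rintro ⟨n, k | k⟩ ⟨n', k' | k'⟩ h <;> simp_all
  filter_upwards [hindep.strong_law_ae_blocks hlaw hunit (stronglyMeasurable_unitSaliency D x)
    (integrable_unitSaliency hν D x)] with ω hω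
  rw [integral_unitSaliency_eq_zero hν hsymm] at hω
  -- the `n`-th summand of `hω` unfolds to the `n`-th summand of the goal
  exact hω

/-- **Theorem 2, LLN form for the full three-layer CNN.** With patch maps `D j`,
i.i.d. standard Gaussian (scale `c`) filters `w i` and i.i.d. `N(0, c²)` weights `V (i, j)`,
all mutually independent (as joint independence of all real coordinates), almost surely the
`(1/N)`-scaled saliency map
`(1/N) ∑_{i<N} ∑_j D jᵀ (V i j · 𝟙(⟪w i, D j x⟫ > 0) • w i)` converges to `0`. -/
theorem saliency_map_vanishes {Ω : Type*} [MeasureSpace Ω]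
    [IsProbabilityMeasure (ℙ : Measure Ω)]
    (c : ℝ) (hc : 0 < c) (d p J : ℕ) (hd : 0 < d) (hp : 0 < p) (hJ : 0 < J)
    (x : EuclideanSpace ℝ (Fin d))
    (D : Fin J → EuclideanSpace ℝ (Fin d) →L[ℝ] EuclideanSpace ℝ (Fin p))
    (w : ℕ → Ω → EuclideanSpace ℝ (Fin p)) (V : ℕ × Fin J → Ω → ℝ)
    (hindep : iIndepFun
      (fun k : (ℕ × Fin p) ⊕ (ℕ × Fin J) =>
        Sum.elim (fun im : ℕ × Fin p => fun ω => w im.1 ω im.2)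
          (fun ij : ℕ × Fin J => V ij) k) ℙ)
    (hw : ∀ i m, Measure.map (fun ω => w i ω m) ℙ = gaussianReal 0 ⟨c ^ 2, sq_nonneg c⟩)
    (hV : ∀ i j, Measure.map (V (i, j)) ℙ = gaussianReal 0 ⟨c ^ 2, sq_nonneg c⟩) :
    ∀ᵐ ω ∂ℙ, Tendsto (fun N : ℕ =>
        (N : ℝ)⁻¹ • ∑ i ∈ Finset.range N, ∑ j : Fin J,
          (ContinuousLinearMap.adjoint (D j))
            ((V (i, j) ω * (if 0 < ⟪w i ω, D j x⟫ then (1 : ℝ) else 0)) • w i ω))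
      atTop (𝓝 (0 : EuclideanSpace ℝ (Fin d))) :=
  saliency_map_vanishes_general c d p J x D w V hindep hw hV
end
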